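/- (Leibniz formula) Let f, g : ℝ → ℝ, let m ∈ ℕ, and let t ∈ ℝ with t ∉ S. For 0 ≤ k ≤ m, let 𝒮^m_k be the set of all strings of length m consisting of exactly k occurrences of the operator h^∘ (where h^∘ f := f ∘ h) and m − k occurrences of the operator D_{n,q}, each string acting on f by composition of the m operators. Then D_{n,q}^m (f·g)(t) = ∑_{k=0}^{m} ( ∑_{L ∈ 𝒮^m_k} (L f)(t) ) · D_{n,q}^k g(t), where D_{n,q}^k denotes the k-fold iterate of D_{n,q}. (Note that if t ∉ S then h(t) ∉ S, so all the operators appearing are given by the difference-quotient formula.) -/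

import Mathlib

open Filter
open scoped Classical

noncomputable section

/-- `[k]_n = ∑_{i=0}^{k-1} n^i` (so `[0]_n = 0`). -/
def nbr (n k : ℕ) : ℕ := ∑ i ∈ Finset.range k, n ^ i

/-- `h(t) = q·t^n`. -/
def hfun (q : ℝ) (n : ℕ) (t : ℝ) : ℝ := q * t ^ n

/-- `θ = q^(1/(1-n))` (meaningful for `n ≥ 3`). -/
def theta (q : ℝ) (n : ℕ) : ℝ := q ^ ((1 : ℝ) / (1 - (n : ℝ)))

/-- `S = {0}` if `n = 1`, and `S = {-θ, 0, θ}` if `n ≥ 3`. -/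
def Sset (q : ℝ) (n : ℕ) : Set ℝ :=
  if n = 1 then {0} else {-theta q n, 0, theta q n}

/-- `I = (-θ, θ)` (all of `ℝ` when `n = 1`). -/
def Iset (q : ℝ) (n : ℕ) : Set ℝ :=
  if n = 1 then Set.univ else Set.Ioo (-theta q n) (theta q n)

/-- The `n,q`-power difference operator `D_{n,q}`. -/
def Dnq (q : ℝ) (n : ℕ) (f : ℝ → ℝ) (t : ℝ) : ℝ :=
  if t ∈ Sset q n then deriv f t
  else (f (q * t ^ n) - f t) / (q * t ^ n - t)

/-- The `k`-th summand of the series defining the `n,q`-integral `∫_0^x f(t) d_{n,q}t`. -/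
def nqSeq (q : ℝ) (n : ℕ) (f : ℝ → ℝ) (x : ℝ) (k : ℕ) : ℝ :=
  q ^ nbr n k * x ^ n ^ k * (q ^ n ^ k * x ^ (n ^ k * (n - 1)) - 1) *
    f (q ^ nbr n k * x ^ n ^ k)

/-- `∫_0^x f(t) d_{n,q}t`. -/
def nqInt0 (q : ℝ) (n : ℕ) (f : ℝ → ℝ) (x : ℝ) : ℝ := -∑' k : ℕ, nqSeq q n f x k

/-- `∫_a^b f(t) d_{n,q}t = ∫_0^b f(t) d_{n,q}t − ∫_0^a f(t) d_{n,q}t`. -/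
def nqInt (q : ℝ) (n : ℕ) (f : ℝ → ℝ) (a b : ℝ) : ℝ :=
  nqInt0 q n f b - nqInt0 q n f a

/-- The orbit `[s]_{n,q} = {q^{[k]_n}·s^{n^k} : k ∈ ℕ}`. -/
def nqOrbit (q : ℝ) (n : ℕ) (s : ℝ) : Set ℝ :=
  Set.range fun k : ℕ => q ^ nbr n k * s ^ n ^ k

/-- The `n,q`-interval `[a,b]_{n,q}`. -/
def nqInterval (q : ℝ) (n : ℕ) (a b : ℝ) : Set ℝ :=
  nqOrbit q n a ∪ nqOrbit q n b ∪ {0}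

/-!
The points of `S` are exactly the fixed points of `h`, and `h` is injective, so `h` maps the
complement of `S` to itself and has no fixed point there. Off `S` the operator `D_{n,q}` is
therefore a genuine difference quotient along `h`, which is linear and obeys the product rule
`D(uv)(t) = u(h t) · Dv(t) + Du(t) · v(t)`. Iterating, each of the `m` applications of `D`
either falls on the `g`-factor (turning `u` into `u ∘ h` in the `f`-factor) or on the
`f`-factor, which produces one summand for every string of `m` operators.
-/

section

variable {q : ℝ} {n : ℕ}

theorem theta_pos (hq0 : 0 < q) : 0 < theta q n := Real.rpow_pos_of_pos hq0 _

theorem theta_pow_sub_one (hq0 : 0 < q) (hn : 1 < n) : theta q n ^ (n - 1) = q⁻¹ := by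
  have hne : (1 : ℝ) - n ≠ 0 := by
    have : (1 : ℝ) < n := by exact_mod_cast hn
    linarith
  rw [theta, ← Real.rpow_natCast, ← Real.rpow_mul hq0.le, Nat.cast_sub hn.le,
    show (1 : ℝ) / (1 - n) * (n - (1 : ℕ)) = -1 by field_simp; push_cast; ring,
    Real.rpow_neg_one]

theorem hfun_injective (hq0 : 0 < q) (hn : Odd n) : Function.Injective (hfun q n) :=
  fun _ _ h => hn.strictMono_pow.injective (mul_left_cancel₀ hq0.ne' h)

theorem hfun_eq_self_iff (hq0 : 0 < q) (hq1 : q ≠ 1) (hn : Odd n) {t : ℝ} :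
    hfun q n t = t ↔ t ∈ Sset q n := by
  unfold hfun Sset
  split_ifs with h1
  · subst h1
    rw [pow_one, Set.mem_singleton_iff]
    constructor
    · intro h
      by_contra ht
      exact hq1 ((mul_eq_right₀ ht).1 h)
    · rintro rfl
      rw [mul_zero]
  · have h3 : 3 ≤ n := by obtain ⟨k, rfl⟩ := hn; omega
    have heven : Even (n - 1) := by obtain ⟨k, rfl⟩ := hn; exact ⟨k, by omega⟩
    have hθ := theta_pos (n := n) hq0
    have hroot : q * t ^ (n - 1) = 1 ↔ |t| = theta q n := by
      rw [← pow_left_inj₀ (abs_nonneg t) hθ.le (by omega : n - 1 ≠ 0), heven.pow_abs,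
        theta_pow_sub_one hq0 (by omega), ← mul_eq_one_iff_eq_inv₀ hq0.ne', mul_comm]
    rw [← pow_sub_one_mul (by omega : n ≠ 0), ← mul_assoc]
    by_cases ht : t = 0
    · simp [ht]
    · rw [mul_eq_right₀ ht, hroot, abs_eq hθ.le]
      simp only [Set.mem_insert_iff, Set.mem_singleton_iff]
      tauto

theorem hfun_ne_self (hq0 : 0 < q) (hq1 : q ≠ 1) (hn : Odd n) {t : ℝ} (ht : t ∉ Sset q n) :
    hfun q n t ≠ t :=
  fun h => ht ((hfun_eq_self_iff hq0 hq1 hn).1 h)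

theorem hfun_notMem_Sset (hq0 : 0 < q) (hq1 : q ≠ 1) (hn : Odd n) {t : ℝ}
    (ht : t ∉ Sset q n) : hfun q n t ∉ Sset q n := fun hS =>
  hfun_ne_self hq0 hq1 hn ht
    (hfun_injective hq0 hn ((hfun_eq_self_iff hq0 hq1 hn).2 hS))

namespace Dnq

theorem apply_of_notMem {t : ℝ} (ht : t ∉ Sset q n) (u : ℝ → ℝ) :
    Dnq q n u t = (u (hfun q n t) - u t) / (hfun q n t - t) := by
  simp [Dnq, ht, hfun]

theorem congr_of_notMem {t : ℝ} (ht : t ∉ Sset q n) {u v : ℝ → ℝ} (h₀ : u t = v t)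
    (h₁ : u (hfun q n t) = v (hfun q n t)) : Dnq q n u t = Dnq q n v t := by
  rw [apply_of_notMem ht, apply_of_notMem ht, h₀, h₁]

theorem sum_of_notMem {ι : Type*} (s : Finset ι) (u : ι → ℝ → ℝ) {t : ℝ}
    (ht : t ∉ Sset q n) :
    Dnq q n (fun x => ∑ i ∈ s, u i x) t = ∑ i ∈ s, Dnq q n (u i) t := by
  simp only [apply_of_notMem ht, ← Finset.sum_div, ← Finset.sum_sub_distrib]

theorem mul_of_notMem {t : ℝ} (ht : t ∉ Sset q n) (hne : hfun q n t ≠ t) (u v : ℝ → ℝ) :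
    Dnq q n (fun x => u x * v x) t = u (hfun q n t) * Dnq q n v t + Dnq q n u t * v t := by
  have hd : hfun q n t - t ≠ 0 := sub_ne_zero.2 hne
  simp only [apply_of_notMem ht]
  field_simp
  ring

end Dnq

end

section Strings

open Finset

theorem Fintype.sum_fun_fin_succ {α M : Type*} [Fintype α] [AddCommMonoid M] {m : ℕ}
    (F : (Fin (m + 1) → α) → M) : ∑ L, F L = ∑ a, ∑ L : Fin m → α, F (Fin.cons a L) :=
  (Fintype.sum_equiv (Fin.consEquiv fun _ => α) _ _ fun _ => rfl).symm.trans
    (Fintype.sum_prod_type _)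

theorem card_filter_cons_eq_true {m : ℕ} (b : Bool) (L : Fin m → Bool) :
    #{i | (Fin.cons b L : Fin (m + 1) → Bool) i = true} =
      (if b then 1 else 0) + #{i | L i = true} := by
  rw [Fin.card_filter_univ_succ']
  simp only [Fin.cons_zero, Fin.cons_succ]

/-- The action on `f` of the string of operators `L`, where `true` stands for `u ↦ u ∘ h`
and `false` for `D_{n,q}`; the letter `L 0` is applied last. -/
def stringOp (q : ℝ) (n : ℕ) {m : ℕ} (L : Fin m → Bool) (f : ℝ → ℝ) : ℝ → ℝ :=
  (List.ofFn L).foldr (fun b u => if b then u ∘ hfun q n else Dnq q n u) f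

theorem stringOp_cons (q : ℝ) (n : ℕ) {m : ℕ} (b : Bool) (L : Fin m → Bool) (f : ℝ → ℝ) :
    stringOp q n (Fin.cons b L) f =
      if b then stringOp q n L f ∘ hfun q n else Dnq q n (stringOp q n L f) := by
  simp [stringOp, List.ofFn_succ]

variable {q : ℝ} {n : ℕ}

theorem Dnq.iterate_mul_of_notMem (hq0 : 0 < q) (hq1 : q ≠ 1) (hn : Odd n) (f g : ℝ → ℝ)
    (m : ℕ) {t : ℝ} (ht : t ∉ Sset q n) : (Dnq q n)^[m] (fun x => f x * g x) t =
      ∑ L : Fin m → Bool, stringOp q n L f t * (Dnq q n)^[#{i | L i = true}] g t := by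
  induction m generalizing t with
  | zero => simp [stringOp]
  | succ m ih =>
    have hne := hfun_ne_self hq0 hq1 hn ht
    calc (Dnq q n)^[m + 1] (fun x => f x * g x) t
        = Dnq q n (fun s => ∑ L : Fin m → Bool,
            stringOp q n L f s * (Dnq q n)^[#{i | L i = true}] g s) t := by
          rw [Function.iterate_succ_apply']
          exact Dnq.congr_of_notMem ht (ih ht) (ih (hfun_notMem_Sset hq0 hq1 hn ht))
      _ = ∑ L : Fin m → Bool,
            (stringOp q n L f (hfun q n t) * (Dnq q n)^[#{i | L i = true} + 1] g t +
              Dnq q n (stringOp q n L f) t * (Dnq q n)^[#{i | L i = true}] g t) := by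
          simp only [Dnq.sum_of_notMem _ _ ht, Dnq.mul_of_notMem ht hne,
            Function.iterate_succ_apply']
      _ = _ := by
          simp [Fintype.sum_fun_fin_succ, stringOp_cons, card_filter_cons_eq_true,
            sum_add_distrib, add_comm]

end Strings

theorem stmt6 (q : ℝ) (hq0 : 0 < q) (hq1 : q < 1) (n : ℕ) (hn : Odd n)
    (f g : ℝ → ℝ) (m : ℕ) (t : ℝ) (ht : t ∉ Sset q n) :
    (Dnq q n)^[m] (fun x => f x * g x) t =
      ∑ k ∈ Finset.range (m + 1),
        (∑ L ∈ Finset.univ.filter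
            (fun L : Fin m → Bool =>
              (Finset.univ.filter fun i => L i = true).card = k),
          (List.ofFn L).foldr
            (fun b u => if b then u ∘ hfun q n else Dnq q n u) f t) *
        (Dnq q n)^[k] g t := by
  have hcard (L : Fin m → Bool) :
      (Finset.univ.filter fun i => L i = true).card ∈ Finset.range (m + 1) :=
    Finset.mem_range_succ_iff.2 (Finset.card_le_univ _ |>.trans_eq (Fintype.card_fin m))
  rw [Dnq.iterate_mul_of_notMem hq0 hq1.ne hn f g m ht,
    ← Finset.sum_fiberwise_of_maps_to fun L _ => hcard L]
  refine Finset.sum_congr rfl fun k _ => ?_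
  rw [Finset.sum_mul]
  refine Finset.sum_congr rfl fun L hL => ?_
  rw [(Finset.mem_filter.1 hL).2]
  rfl
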